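/- Every real-valued function P on {−1,1}^{2n²} satisfying |P(X) − f(X)| ≤ 1/3 for all inputs X has spectral norm at least (2/3)·n^n; that is, the 1/3-approximate spectral norm of the transitive function f is at least (2/3)·2^{n log n}. -/

import Mathlib

/-- Encoding of a `{-1,1}`-bit by a Boolean: `true ↦ -1`, `false ↦ 1`. -/
def pm (b : Bool) : ℝ := if b then -1 else 1

/-- The inner product function `IP_m(s,t) = (−1)^{#{i : s_i = t_i = −1}}`. -/
def IP {m : ℕ} (s t : Fin m → Bool) : ℝ := ∏ i, pm (s i && t i)

/-- The Hadamard codeword of `s ∈ {−1,1}^m`: the string in `{−1,1}^{2^m}`, indexed by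
`t ∈ {−1,1}^m`, whose `t`-entry is `∏_{i : s_i = −1} t_i`. -/
def Had {m : ℕ} (s : Fin m → Bool) (t : Fin m → Bool) : ℝ :=
  ∏ i, if s i then pm (t i) else 1

/-- `x ∈ {H(s), −H(s)}` for the string `x ∈ {−1,1}^{2^m}` (indexed by `{−1,1}^m`). -/
def IsHadCodeword {m : ℕ} (x : (Fin m → Bool) → Bool) (s : Fin m → Bool) : Prop :=
  (∀ t, pm (x t) = Had s t) ∨ (∀ t, pm (x t) = -Had s t)

/-- The spectral norm `∑_{S ⊆ ι} |P̂(S)|` of `P : {−1,1}^ι → ℝ`, where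
`P̂(S) = 2^{−|ι|} ∑_x P(x) χ_S(x)`. -/
noncomputable def specNorm {ι : Type*} [Fintype ι] [DecidableEq ι]
    (P : (ι → Bool) → ℝ) : ℝ :=
  ∑ S : Finset ι,
    |(1 / 2 ^ Fintype.card ι : ℝ) * ∑ x : ι → Bool, P x * ∏ i ∈ S, pm (x i)|

/-!
Dual witness. Put `W(X) = ∏ᵢ h̃(Xᵢ, Yᵢ)`. Where `W ≠ 0` it agrees with `f` and is `±1`,
so `P·W ≥ (2/3)|W|` pointwise, and `∑ |W| = (4n²)ⁿ` since each block has exactly `4n²`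
inputs (pairs of signed codewords) on which `h̃ ≠ 0`. By Plancherel,
`∑ P·W ≤ ‖P‖_spec · max_S |∑ W·χ_S|`, and `∑ W·χ_S` factors over the blocks. Inside a
block, a character evaluated at `±H(t)` is, up to sign, `∏_{i : tᵢ = -1} qᵢ` with
`|qᵢ| = 1`, and `∑ₜ IP(s,t) ∏_{i : tᵢ = -1} qᵢ = ∏ᵢ (1 + sᵢqᵢ)` is nonnegative with
total `n` over `s`; so each block coefficient is at most `4n`. Hence
`(2/3)(4n²)ⁿ ≤ ‖P‖_spec · (4n)ⁿ`.
-/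

open Finset

def chi {ι : Type*} (S : Finset ι) (x : ι → Bool) : ℝ := ∏ i ∈ S, pm (x i)

lemma pm_xor (a b : Bool) : pm (xor a b) = pm a * pm b := by
  cases a <;> cases b <;> norm_num [pm]

lemma pm_injective : Function.Injective pm := by
  intro a b; cases a <;> cases b <;> norm_num [pm]

lemma abs_pm (b : Bool) : |pm b| = 1 := by cases b <;> norm_num [pm]

lemma abs_chi {ι : Type*} (S : Finset ι) (x : ι → Bool) : |chi S x| = 1 := by
  simp [chi, abs_prod, abs_pm]

lemma sum_chi_mul_chi {ι : Type*} [Fintype ι] (x y : ι → Bool) :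
    ∑ S : Finset ι, chi S x * chi S y = if x = y then 2 ^ Fintype.card ι else 0 := by
  have hS : ∀ S, chi S x * chi S y = ∏ i ∈ S, pm (xor (x i) (y i)) := fun S => by
    simp only [chi, pm_xor, prod_mul_distrib]
  rw [sum_congr rfl fun S _ => hS S, ← powerset_univ, ← prod_add_one]
  split_ifs with hxy
  · subst hxy
    simp [pm, one_add_one_eq_two]
  · obtain ⟨i, hi⟩ := Function.ne_iff.mp hxy
    refine prod_eq_zero (mem_univ i) ?_
    revert hi; cases x i <;> cases y i <;> norm_num [pm]

section Fourier

variable {ι : Type*} [Fintype ι] [DecidableEq ι]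

lemma sum_sum_mul_chi_mul_sum_mul_chi (P W : (ι → Bool) → ℝ) :
    ∑ S : Finset ι, (∑ x, P x * chi S x) * (∑ y, W y * chi S y)
      = 2 ^ Fintype.card ι * ∑ x, P x * W x := by
  simp_rw [sum_mul_sum]
  rw [sum_comm]
  simp_rw [sum_comm (s := (univ : Finset (Finset ι)))]
  have hxy : ∀ x y, ∑ S : Finset ι, P x * chi S x * (W y * chi S y)
      = if x = y then 2 ^ Fintype.card ι * (P x * W y) else 0 := fun x y => by
    rw [mul_comm, ← mul_zero (P x * W y), ← mul_ite, ← sum_chi_mul_chi x y, mul_sum]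
    exact sum_congr rfl fun S _ => by ring
  simp_rw [hxy, sum_ite_eq, mem_univ, if_true, mul_sum]

lemma sum_mul_le_specNorm_mul (P W : (ι → Bool) → ℝ) {B : ℝ}
    (hW : ∀ S, |∑ x, W x * chi S x| ≤ B) :
    ∑ x, P x * W x ≤ specNorm P * B := by
  calc ∑ x, P x * W x
      = ∑ S : Finset ι, (1 / 2 ^ Fintype.card ι * ∑ x, P x * chi S x) *
          ∑ y, W y * chi S y := by
        simp_rw [mul_assoc, ← mul_sum, sum_sum_mul_chi_mul_sum_mul_chi]
        field_simp
    _ ≤ ∑ S : Finset ι, |1 / 2 ^ Fintype.card ι * ∑ x, P x * chi S x| * B := by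
        refine sum_le_sum fun S _ => ?_
        refine (le_abs_self _).trans ?_
        rw [abs_mul]
        exact mul_le_mul_of_nonneg_left (hW S) (abs_nonneg _)
    _ = specNorm P * B := by rw [specNorm, sum_mul]; rfl

end Fourier

lemma one_sub_mul_sum_abs_le_sum_mul {α : Type*} [Fintype α] (P F W : α → ℝ) {ε : ℝ}
    (hFW : ∀ z, F z * W z = |W z|) (hP : ∀ z, |P z - F z| ≤ ε) :
    (1 - ε) * ∑ z, |W z| ≤ ∑ z, P z * W z := by
  rw [mul_sum]
  refine sum_le_sum fun z _ => ?_
  have herr : |(P z - F z) * W z| ≤ ε * |W z| := by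
    rw [abs_mul]; exact mul_le_mul_of_nonneg_right (hP z) (abs_nonneg _)
  have hsplit : P z * W z = |W z| + (P z - F z) * W z := by rw [← hFW]; ring
  linarith [neg_abs_le ((P z - F z) * W z)]

lemma sum_prod_blocks {ι γ β R : Type*} [Fintype ι] [DecidableEq ι] [Fintype γ] [DecidableEq γ]
    [Fintype β] [CommSemiring R] (f : ι → (γ → β) → R) :
    ∑ z : ι × γ → β, ∏ i, f i (fun b => z (i, b)) = ∏ i, ∑ u : γ → β, f i u := by
  rw [Fintype.prod_sum]
  exact Fintype.sum_equiv (Equiv.curry ι γ β) _ _ fun z => rfl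

lemma sum_sumArrow {α γ β R : Type*} [Fintype α] [DecidableEq α] [Fintype γ] [DecidableEq γ]
    [Fintype β] [AddCommMonoid R] (G : (α → β) → (γ → β) → R) :
    ∑ u : α ⊕ γ → β, G (fun a => u (Sum.inl a)) (fun c => u (Sum.inr c)) = ∑ x, ∑ y, G x y := by
  rw [← Fintype.sum_prod_type']
  exact Fintype.sum_equiv (Equiv.sumArrowEquivProdArrow α γ β) _ _ fun u => rfl

lemma chi_prod {ι γ : Type*} [Fintype ι] [DecidableEq ι] [Fintype γ] [DecidableEq γ]
    (S : Finset (ι × γ)) (z : ι × γ → Bool) :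
    chi S z = ∏ i, chi {b | (i, b) ∈ S} (fun b => z (i, b)) := by
  simp only [chi, prod_filter]
  rw [← Fintype.prod_prod_type', ← prod_filter]
  congr 1; ext; simp

lemma chi_sum {α γ : Type*} (R : Finset (α ⊕ γ)) (u : α ⊕ γ → Bool) :
    chi R u = chi R.toLeft (fun a => u (Sum.inl a)) * chi R.toRight (fun c => u (Sum.inr c)) :=
  prod_sum_eq_prod_toLeft_mul_prod_toRight _ _

section Hadamard

variable {m : ℕ}

lemma Had_eq_one_or_neg_one (s t : Fin m → Bool) : Had s t = 1 ∨ Had s t = -1 := by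
  have h : |Had s t| = 1 := by
    simp only [Had, abs_prod]
    exact prod_eq_one fun i _ => by split_ifs <;> simp [abs_pm]
  rcases abs_eq (zero_le_one' ℝ) |>.mp h with h | h <;> simp [h]

noncomputable def hadBit (s t : Fin m → Bool) : Bool := decide (Had s t = -1)

lemma pm_hadBit (s t : Fin m → Bool) : pm (hadBit s t) = Had s t := by
  rcases Had_eq_one_or_neg_one s t with h | h <;> norm_num [hadBit, h, pm]

noncomputable def signedHad (p : Bool × (Fin m → Bool)) : (Fin m → Bool) → Bool :=
  fun t => xor p.1 (hadBit p.2 t)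

lemma pm_signedHad (p : Bool × (Fin m → Bool)) (t : Fin m → Bool) :
    pm (signedHad p t) = pm p.1 * Had p.2 t := by
  rw [signedHad, pm_xor, pm_hadBit]

lemma Had_zero (s : Fin m → Bool) : Had s (fun _ => false) = 1 := by
  simp [Had, pm]

lemma Had_single (s : Fin m → Bool) (j : Fin m) :
    Had s (fun i => decide (i = j)) = pm (s j) := by
  rw [Had, prod_eq_single j (fun i _ hij => by simp [hij, pm]) (by simp)]
  cases s j <;> simp [pm]

lemma signedHad_injective : Function.Injective (signedHad (m := m)) := by
  rintro ⟨ε, s⟩ ⟨δ, t⟩ hst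
  have hpm : ∀ τ, pm ε * Had s τ = pm δ * Had t τ := fun τ => by
    simpa only [pm_signedHad] using congrArg pm (congrFun hst τ)
  have hεδ : pm ε = pm δ := by simpa [Had_zero] using hpm fun _ => false
  have hne : pm ε ≠ 0 := by cases ε <;> norm_num [pm]
  refine Prod.ext (pm_injective hεδ) (funext fun j => pm_injective ?_)
  rw [← Had_single, ← Had_single]
  exact mul_left_cancel₀ hne (hεδ ▸ hpm _)

lemma isHadCodeword_iff (x : (Fin m → Bool) → Bool) (s : Fin m → Bool) :
    IsHadCodeword x s ↔ ∃ ε, x = signedHad (ε, s) := by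
  simp only [IsHadCodeword, funext_iff, ← pm_injective.eq_iff (a := x _), pm_signedHad,
    Bool.exists_bool]
  norm_num [pm]

lemma exists_isHadCodeword_iff (x : (Fin m → Bool) → Bool) :
    (∃ s, IsHadCodeword x s) ↔ x ∈ Set.range (signedHad (m := m)) := by
  simp only [isHadCodeword_iff, Set.mem_range, Prod.exists, eq_comm (a := x)]
  rw [exists_comm]

lemma chi_signedHad (R : Finset (Fin m → Bool)) (p : Bool × (Fin m → Bool)) :
    chi R (signedHad p) = pm p.1 ^ #R * ∏ i, if p.2 i then chi R (fun τ => τ i) else 1 := by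
  simp only [chi, pm_signedHad, prod_mul_distrib, prod_const, Had]
  rw [prod_comm]
  simp

lemma abs_IP (s t : Fin m → Bool) : |IP s t| = 1 := by
  simp [IP, abs_prod, abs_pm]

lemma sum_IP_mul_prod (s : Fin m → Bool) (q : Fin m → ℝ) :
    ∑ t, IP s t * ∏ i, (if t i then q i else 1) = ∏ i, (1 + pm (s i) * q i) := by
  simp only [IP, ← prod_mul_distrib]
  rw [← Fintype.prod_sum (fun i b => pm (s i && b) * if b then q i else 1)]
  refine prod_congr rfl fun i _ => ?_
  cases s i <;> simp [pm, add_comm]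

lemma sum_abs_sum_IP_mul_prod (q : Fin m → ℝ) (hq : ∀ i, |q i| ≤ 1) :
    ∑ s, |∑ t, IP s t * ∏ i, (if t i then q i else 1)| = 2 ^ m := by
  have hnonneg : ∀ b i, 0 ≤ 1 + pm b * q i := fun b i => by
    have h : |pm b * q i| ≤ 1 := by rw [abs_mul, abs_pm, one_mul]; exact hq i
    linarith [neg_abs_le (pm b * q i)]
  simp_rw [sum_IP_mul_prod, abs_of_nonneg (prod_nonneg fun i _ => hnonneg _ i)]
  rw [← Fintype.prod_sum (fun i b => 1 + pm b * q i)]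
  have h2 : ∀ i, ∑ b, (1 + pm b * q i) = 2 := fun i => by simp [pm]; ring
  rw [prod_congr rfl fun i _ => h2 i, prod_const, card_univ, Fintype.card_fin]

end Hadamard

section Block

variable {m : ℕ} {h : ((Fin m → Bool) → Bool) → ((Fin m → Bool) → Bool) → ℝ}
  (hcode : ∀ x y s t, IsHadCodeword x s → IsHadCodeword y t → h x y = IP s t)
  (hstar : ∀ x y, ((¬ ∃ s, IsHadCodeword x s) ∨ (¬ ∃ t, IsHadCodeword y t)) → h x y = 0)
include hcode

lemma h_signedHad (p q : Bool × (Fin m → Bool)) :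
    h (signedHad p) (signedHad q) = IP p.2 q.2 :=
  hcode _ _ _ _ ((isHadCodeword_iff _ _).mpr ⟨p.1, rfl⟩)
    ((isHadCodeword_iff _ _).mpr ⟨q.1, rfl⟩)

include hstar

lemma abs_h_eq_mul_self (x y : (Fin m → Bool) → Bool) : |h x y| = h x y * h x y := by
  by_cases hxy : (∃ s, IsHadCodeword x s) ∧ ∃ t, IsHadCodeword y t
  · obtain ⟨⟨s, hs⟩, ⟨t, ht⟩⟩ := hxy
    rw [hcode x y s t hs ht, ← abs_mul_abs_self, abs_IP, mul_one]
  · rw [hstar x y (not_and_or.mp hxy), abs_zero, mul_zero]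

lemma sum_sum_h_mul (G : ((Fin m → Bool) → Bool) → ((Fin m → Bool) → Bool) → ℝ) :
    ∑ x, ∑ y, h x y * G x y = ∑ p, ∑ q, IP p.2 q.2 * G (signedHad p) (signedHad q) := by
  simp only [← Fintype.sum_prod_type']
  refine (Fintype.sum_of_injective (Prod.map signedHad signedHad)
    (signedHad_injective.prodMap signedHad_injective) _ _ (fun xy hxy => ?_)
    (fun pq => by rw [Prod.map_fst, Prod.map_snd, h_signedHad hcode])).symm
  simp only [Set.range_prodMap, Set.mem_prod, not_and_or, ← exists_isHadCodeword_iff] at hxy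
  rw [hstar _ _ hxy, zero_mul]

lemma sum_abs_h :
    ∑ u : (Fin m → Bool) ⊕ (Fin m → Bool) → Bool,
      |h (fun t => u (Sum.inl t)) (fun t => u (Sum.inr t))| = 4 * 4 ^ m := by
  rw [sum_sumArrow (fun x y => |h x y|)]
  simp_rw [abs_h_eq_mul_self hcode hstar, sum_sum_h_mul hcode hstar, h_signedHad hcode,
    ← abs_mul_abs_self (IP _ _), abs_IP, mul_one]
  simp only [sum_const, card_univ, Fintype.card_prod, Fintype.card_bool, Fintype.card_fun,
    Fintype.card_fin, nsmul_eq_mul, mul_one]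
  push_cast
  rw [show (4 : ℝ) = 2 ^ 2 by norm_num, ← pow_mul]
  ring

lemma abs_sum_h_mul_chi_le (R : Finset ((Fin m → Bool) ⊕ (Fin m → Bool))) :
    |∑ u : (Fin m → Bool) ⊕ (Fin m → Bool) → Bool,
      h (fun t => u (Sum.inl t)) (fun t => u (Sum.inr t)) * chi R u| ≤ 4 * 2 ^ m := by
  simp_rw [chi_sum R]
  rw [sum_sumArrow (fun x y => h x y * (chi R.toLeft x * chi R.toRight y)),
    sum_sum_h_mul hcode hstar]
  set g : (Fin m → Bool) → ℝ := fun t => ∏ i, if t i then chi R.toRight (fun τ => τ i) else 1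
  have hinner : ∀ p : Bool × (Fin m → Bool),
      |∑ q : Bool × (Fin m → Bool),
          IP p.2 q.2 * (chi R.toLeft (signedHad p) * chi R.toRight (signedHad q))|
        ≤ 2 * |∑ t, IP p.2 t * g t| := fun p => by
    have hfactor : ∑ q : Bool × (Fin m → Bool),
        IP p.2 q.2 * (chi R.toLeft (signedHad p) * chi R.toRight (signedHad q))
          = chi R.toLeft (signedHad p) * ∑ δ : Bool, pm δ ^ #R.toRight * ∑ t, IP p.2 t * g t := by
      simp only [Fintype.sum_prod_type, chi_signedHad, mul_sum]
      exact sum_congr rfl fun δ _ => sum_congr rfl fun t _ => by ring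
    have hsign : |∑ δ : Bool, pm δ ^ #R.toRight| ≤ 2 :=
      (abs_sum_le_sum_abs _ _).trans (by simp [abs_pow, abs_pm])
    rw [hfactor, abs_mul, abs_chi, one_mul, ← sum_mul, abs_mul]
    exact mul_le_mul_of_nonneg_right hsign (abs_nonneg _)
  calc _ ≤ ∑ p : Bool × (Fin m → Bool), |∑ q : Bool × (Fin m → Bool),
          IP p.2 q.2 * (chi R.toLeft (signedHad p) * chi R.toRight (signedHad q))| :=
        abs_sum_le_sum_abs _ _
    _ ≤ ∑ p : Bool × (Fin m → Bool), 2 * |∑ t, IP p.2 t * g t| := sum_le_sum fun p _ => hinner p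
    _ = 4 * ∑ s, |∑ t, IP s t * g t| := by
        rw [Fintype.sum_prod_type]; simp [← mul_sum]; ring
    _ = 4 * 2 ^ m := by rw [sum_abs_sum_IP_mul_prod _ fun i => (abs_chi _ _).le]

end Block

theorem stmt_17_general (m : ℕ)
    (h : ((Fin m → Bool) → Bool) → ((Fin m → Bool) → Bool) → ℝ)
    (hcode : ∀ x y s t, IsHadCodeword x s → IsHadCodeword y t → h x y = IP s t)
    (hstar : ∀ x y,
      ((¬ ∃ s, IsHadCodeword x s) ∨ (¬ ∃ t, IsHadCodeword y t)) → h x y = 0)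
    (F : ((Fin (2 ^ m) × ((Fin m → Bool) ⊕ (Fin m → Bool))) → Bool) → ℝ)
    (hF1 : ∀ z, (∀ i : Fin (2 ^ m),
        h (fun t => z (i, Sum.inl t)) (fun t => z (i, Sum.inr t)) ≠ 0) →
      F z = ∏ i : Fin (2 ^ m),
        h (fun t => z (i, Sum.inl t)) (fun t => z (i, Sum.inr t)))
    (P : ((Fin (2 ^ m) × ((Fin m → Bool) ⊕ (Fin m → Bool))) → Bool) → ℝ)
    (hP : ∀ z, |P z - F z| ≤ 1 / 3) :
    (2 / 3 : ℝ) * ((2 : ℝ) ^ m) ^ (2 ^ m : ℕ) ≤ specNorm P := by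
  set W : ((Fin (2 ^ m) × ((Fin m → Bool) ⊕ (Fin m → Bool))) → Bool) → ℝ :=
    fun z => ∏ i, h (fun t => z (i, Sum.inl t)) (fun t => z (i, Sum.inr t))
  have hFW : ∀ z, F z * W z = |W z| := fun z => by
    by_cases hz : ∀ i, h (fun t => z (i, Sum.inl t)) (fun t => z (i, Sum.inr t)) ≠ 0
    · simp only [hF1 z hz, W, abs_prod, abs_h_eq_mul_self hcode hstar, prod_mul_distrib]
    · obtain ⟨i, hi⟩ := not_forall_not.mp hz
      rw [show W z = 0 from prod_eq_zero (mem_univ i) hi, mul_zero, abs_zero]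
  have hsumW : ∑ z, |W z| = (4 * 4 ^ m) ^ 2 ^ m := by
    simp only [W, abs_prod]
    rw [sum_prod_blocks (fun i u => |h (fun t => u (Sum.inl t)) (fun t => u (Sum.inr t))|)]
    simp [sum_abs_h hcode hstar]
  have hcoeff : ∀ S, |∑ z, W z * chi S z| ≤ (4 * 2 ^ m) ^ 2 ^ m := fun S => by
    simp only [W, chi_prod S, ← prod_mul_distrib]
    rw [sum_prod_blocks (fun i u =>
      h (fun t => u (Sum.inl t)) (fun t => u (Sum.inr t)) * chi {b | (i, b) ∈ S} u), abs_prod]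
    refine (prod_le_prod (fun i _ => abs_nonneg _)
      fun i _ => abs_sum_h_mul_chi_le hcode hstar _).trans_eq (by simp)
  have key := (one_sub_mul_sum_abs_le_sum_mul P F W hFW hP).trans
    (sum_mul_le_specNorm_mul P W hcoeff)
  have hsplit : ((4 : ℝ) * 4 ^ m) ^ 2 ^ m = (2 ^ m) ^ 2 ^ m * (4 * 2 ^ m) ^ 2 ^ m := by
    rw [← mul_pow, show (4 : ℝ) ^ m = 2 ^ m * 2 ^ m by rw [← mul_pow]; norm_num]
    ring
  rw [hsumW, hsplit] at key
  refine le_of_mul_le_mul_right ?_ (by positivity : (0 : ℝ) < (4 * 2 ^ m) ^ 2 ^ m)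
  linarith

/-- Let `n = 2^m` and let `f` be the transitive function of `2n²` Boolean variables
(the PARITY of the `n` decoded inner-product values of Hadamard-encoded blocks, with
value `−1` when some block is not a signed Hadamard codeword). Every real-valued `P`
with `|P(X) − f(X)| ≤ 1/3` on all inputs has spectral norm at least
`(2/3)·n^n = (2/3)·2^{n log n}`. -/
theorem stmt_17 (m : ℕ) (hm : 1 ≤ m)
    (h : ((Fin m → Bool) → Bool) → ((Fin m → Bool) → Bool) → ℝ)
    (hcode : ∀ x y s t, IsHadCodeword x s → IsHadCodeword y t → h x y = IP s t)
    (hstar : ∀ x y,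
      ((¬ ∃ s, IsHadCodeword x s) ∨ (¬ ∃ t, IsHadCodeword y t)) → h x y = 0)
    (F : ((Fin (2 ^ m) × ((Fin m → Bool) ⊕ (Fin m → Bool))) → Bool) → ℝ)
    (hF1 : ∀ z, (∀ i : Fin (2 ^ m),
        h (fun t => z (i, Sum.inl t)) (fun t => z (i, Sum.inr t)) ≠ 0) →
      F z = ∏ i : Fin (2 ^ m),
        h (fun t => z (i, Sum.inl t)) (fun t => z (i, Sum.inr t)))
    (hF2 : ∀ z, (∃ i : Fin (2 ^ m),
        h (fun t => z (i, Sum.inl t)) (fun t => z (i, Sum.inr t)) = 0) →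
      F z = -1)
    (P : ((Fin (2 ^ m) × ((Fin m → Bool) ⊕ (Fin m → Bool))) → Bool) → ℝ)
    (hP : ∀ z, |P z - F z| ≤ 1 / 3) :
    (2 / 3 : ℝ) * ((2 : ℝ) ^ m) ^ (2 ^ m : ℕ) ≤ specNorm P :=
  stmt_17_general m h hcode hstar F hF1 P hP
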